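/- Let I₀(x) = ∑_{k=0}^∞ (x/2)^{2k} / (k!)² and I₁(x) = ∑_{k=0}^∞ (x/2)^{2k+1} / (k!·(k+1)!). Fix Ω ∈ ℝ, ℓ > 0, R > 0, and define v : (0, R] → ℝ by v(r) = Ωr + Ω·( R I₁(r/ℓ) − r I₁(R/ℓ) ) / ( I₁(R/ℓ) − (R/ℓ) I₁'(R/ℓ) ). Then the denominator I₁(R/ℓ) − (R/ℓ)I₁'(R/ℓ) is nonzero, v satisfies 𝓜(1 − ℓ²𝓜)v = 0 on (0, R) where 𝓜f = f'' + (1/r)f' − f/r², and v satisfies the strong adherence boundary conditions v(R) = ΩR and v'(R) = 0. -/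

import Mathlib

/-- Modified Bessel function of the first kind of order 0. -/
noncomputable def besselI0 (x : ℝ) : ℝ :=
  ∑' k : ℕ, (x / 2) ^ (2 * k) / (k.factorial : ℝ) ^ 2

/-- Modified Bessel function of the first kind of order 1. -/
noncomputable def besselI1 (x : ℝ) : ℝ :=
  ∑' k : ℕ, (x / 2) ^ (2 * k + 1) / ((k.factorial : ℝ) * ((k + 1).factorial : ℝ))

/-- The cylindrical operator `𝓜 f = f'' + (1/r) f' − f/r²`. -/
noncomputable def cylOpM (f : ℝ → ℝ) (r : ℝ) : ℝ :=
  deriv (deriv f) r + (1 / r) * deriv f r - f r / r ^ 2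


namespace TCAux

/-- Coefficient of the `I₁` power series. -/
noncomputable def a (k : ℕ) : ℝ := (1/2) ^ (2*k+1) / (k.factorial * (k+1).factorial)

noncomputable def t1 (k : ℕ) (x : ℝ) : ℝ := a k * x ^ (2*k+1)
noncomputable def t2 (k : ℕ) (x : ℝ) : ℝ := a k * (((2*k+1 : ℕ) : ℝ) * x ^ (2*k))
noncomputable def t3 (k : ℕ) (x : ℝ) : ℝ :=
  a k * (((2*k+1 : ℕ) : ℝ) * (((2*k : ℕ) : ℝ) * x ^ (2*k-1)))

noncomputable def f1 (x : ℝ) : ℝ := ∑' k, t1 k x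
noncomputable def d1 (x : ℝ) : ℝ := ∑' k, t2 k x
noncomputable def d2 (x : ℝ) : ℝ := ∑' k, t3 k x

lemma a_pos (k : ℕ) : 0 < a k := by
  unfold a; positivity

lemma a_le (k : ℕ) : a k ≤ 1 / k.factorial := by
  unfold a
  have h1 : ((1:ℝ)/2) ^ (2*k+1) ≤ 1 := pow_le_one₀ (by norm_num) (by norm_num)
  have h2 : (k.factorial : ℝ) ≤ (k.factorial : ℝ) * ((k+1).factorial : ℝ) := by
    nlinarith [Nat.one_le_cast (α := ℝ) |>.mpr (Nat.one_le_iff_ne_zero.mpr (k+1).factorial_ne_zero),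
      Nat.cast_pos (α := ℝ) |>.mpr k.factorial_pos]
  have h3 : (0:ℝ) < (k.factorial : ℝ) := Nat.cast_pos.mpr k.factorial_pos
  have h4 : (0:ℝ) < (k.factorial : ℝ) * ((k+1).factorial : ℝ) := by positivity
  calc (1/2:ℝ) ^ (2*k+1) / ((k.factorial : ℝ) * ((k+1).factorial : ℝ))
      ≤ 1 / ((k.factorial : ℝ) * ((k+1).factorial : ℝ)) := by gcongr
    _ ≤ 1 / (k.factorial : ℝ) := by
        apply div_le_div_of_nonneg_left (by norm_num) h3 h2

lemma pow_sq_bound (k : ℕ) : ((k:ℝ)+1)^2 ≤ 4 * 4^k := by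
  induction k with
  | zero => norm_num
  | succ n ih =>
    push_cast
    have h : ((n:ℝ)+1+1)^2 ≤ 4*((n:ℝ)+1)^2 := by nlinarith [n.cast_nonneg (α := ℝ)]
    calc ((n:ℝ)+1+1)^2 ≤ 4*((n:ℝ)+1)^2 := h
      _ ≤ 4*(4*4^n) := by nlinarith
      _ = 4*4^(n+1) := by ring

lemma master (x : ℝ) (hx : 0 ≤ x) :
    Summable (fun k : ℕ => (2*(k:ℝ)+2)^2 * x^k / k.factorial) := by
  refine Summable.of_nonneg_of_le (fun k => by positivity) (fun k => ?_)
    ((Real.summable_pow_div_factorial (4*x)).mul_left 16)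
  have h2 := pow_sq_bound k
  have hp : (0:ℝ) ≤ x^k := pow_nonneg hx k
  have hnum : (2*(k:ℝ)+2)^2 * x^k ≤ 16 * (4*x)^k := by
    rw [mul_pow]
    have : (2*(k:ℝ)+2)^2 ≤ 16 * 4^k := by nlinarith
    nlinarith [pow_nonneg (show (0:ℝ) ≤ 4 by norm_num) k]
  have hk : (0:ℝ) < k.factorial := Nat.cast_pos.mpr k.factorial_pos
  calc (2*(k:ℝ)+2)^2 * x^k / k.factorial ≤ 16 * (4*x)^k / k.factorial := by gcongr
    _ = 16 * ((4*x)^k / k.factorial) := by ring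


lemma abs_t2_le {ρ y : ℝ} (hρ : 1 ≤ ρ) (hy : |y| ≤ ρ) (k : ℕ) :
    ‖t2 k y‖ ≤ (2*(k:ℝ)+2)^2 * (ρ^2)^k / k.factorial := by
  have hρ0 : (0:ℝ) ≤ ρ := by linarith
  rw [← pow_mul]
  have h1 : ‖t2 k y‖ = a k * (((2*k+1 : ℕ) : ℝ) * |y| ^ (2*k)) := by
    rw [t2, Real.norm_eq_abs, abs_mul, abs_of_pos (a_pos k), abs_mul, abs_pow,
      Nat.abs_cast]
  rw [h1]
  have h2 : |y| ^ (2*k) ≤ ρ ^ (2*k) := pow_le_pow_left₀ (abs_nonneg y) hy _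
  have h3 : ((2*k+1 : ℕ) : ℝ) ≤ (2*(k:ℝ)+2)^2 := by push_cast; nlinarith [k.cast_nonneg (α := ℝ)]
  calc a k * (((2*k+1 : ℕ) : ℝ) * |y| ^ (2*k))
      ≤ (1/k.factorial) * ((2*(k:ℝ)+2)^2 * ρ ^ (2*k)) := by
        apply mul_le_mul (a_le k) (mul_le_mul h3 h2 (by positivity) (by positivity))
          (by positivity) (by positivity)
    _ = (2*(k:ℝ)+2)^2 * ρ ^ (2*k) / k.factorial := by ring

lemma abs_t3_le {ρ y : ℝ} (hρ : 1 ≤ ρ) (hy : |y| ≤ ρ) (k : ℕ) :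
    ‖t3 k y‖ ≤ (2*(k:ℝ)+2)^2 * (ρ^2)^k / k.factorial := by
  have hρ0 : (0:ℝ) ≤ ρ := by linarith
  rw [← pow_mul]
  have h1 : ‖t3 k y‖ = a k * (((2*k+1 : ℕ) : ℝ) * (((2*k : ℕ) : ℝ) * |y| ^ (2*k-1))) := by
    rw [t3, Real.norm_eq_abs, abs_mul, abs_of_pos (a_pos k), abs_mul, abs_mul, abs_pow,
      Nat.abs_cast, Nat.abs_cast]
  rw [h1]
  have h2 : |y| ^ (2*k-1) ≤ ρ ^ (2*k) := by
    calc |y| ^ (2*k-1) ≤ ρ ^ (2*k-1) := pow_le_pow_left₀ (abs_nonneg y) hy _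
      _ ≤ ρ ^ (2*k) := pow_le_pow_right₀ hρ (by omega)
  have h3 : ((2*k+1 : ℕ) : ℝ) * ((2*k : ℕ) : ℝ) ≤ (2*(k:ℝ)+2)^2 := by
    push_cast; nlinarith [k.cast_nonneg (α := ℝ)]
  calc a k * (((2*k+1 : ℕ) : ℝ) * (((2*k : ℕ) : ℝ) * |y| ^ (2*k-1)))
      ≤ (1/k.factorial) * ((2*(k:ℝ)+2)^2 * ρ ^ (2*k)) := by
        apply mul_le_mul (a_le k) ?_ (by positivity) (by positivity)
        rw [← mul_assoc]
        exact mul_le_mul h3 h2 (by positivity) (by positivity)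
    _ = (2*(k:ℝ)+2)^2 * ρ ^ (2*k) / k.factorial := by ring

lemma abs_t1_le {ρ y : ℝ} (hρ : 1 ≤ ρ) (hy : |y| ≤ ρ) (k : ℕ) :
    ‖t1 k y‖ ≤ ρ * ((2*(k:ℝ)+2)^2 * (ρ^2)^k / k.factorial) := by
  have hρ0 : (0:ℝ) ≤ ρ := by linarith
  rw [← pow_mul]
  have h1 : ‖t1 k y‖ = a k * |y| ^ (2*k+1) := by
    rw [t1, Real.norm_eq_abs, abs_mul, abs_of_pos (a_pos k), abs_pow]
  rw [h1]
  have h2 : |y| ^ (2*k+1) ≤ ρ ^ (2*k+1) := pow_le_pow_left₀ (abs_nonneg y) hy _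
  have h4 : (1:ℝ) ≤ (2*(k:ℝ)+2)^2 := by nlinarith [k.cast_nonneg (α := ℝ)]
  calc a k * |y| ^ (2*k+1) ≤ (1/k.factorial) * ρ ^ (2*k+1) := by
        apply mul_le_mul (a_le k) h2 (by positivity) (by positivity)
    _ = ρ * (1 * ρ ^ (2*k) / k.factorial) := by rw [pow_succ]; ring
    _ ≤ ρ * ((2*(k:ℝ)+2)^2 * ρ ^ (2*k) / k.factorial) := by gcongr

lemma summable_t1 (y : ℝ) : Summable (fun k => t1 k y) := by
  have hρ : (1:ℝ) ≤ |y| + 1 := by linarith [abs_nonneg y]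
  exact Summable.of_norm_bounded (((master ((|y|+1)^2) (by positivity)).mul_left (|y|+1)))
    (abs_t1_le hρ (by linarith))

lemma summable_t2 (y : ℝ) : Summable (fun k => t2 k y) := by
  have hρ : (1:ℝ) ≤ |y| + 1 := by linarith [abs_nonneg y]
  exact Summable.of_norm_bounded (master ((|y|+1)^2) (by positivity))
    (abs_t2_le hρ (by linarith))

lemma summable_t3 (y : ℝ) : Summable (fun k => t3 k y) := by
  have hρ : (1:ℝ) ≤ |y| + 1 := by linarith [abs_nonneg y]
  exact Summable.of_norm_bounded (master ((|y|+1)^2) (by positivity))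
    (abs_t3_le hρ (by linarith))

lemma hasSum_t1 (x : ℝ) : HasSum (fun k => t1 k x) (f1 x) := (summable_t1 x).hasSum
lemma hasSum_t2 (x : ℝ) : HasSum (fun k => t2 k x) (d1 x) := (summable_t2 x).hasSum
lemma hasSum_t3 (x : ℝ) : HasSum (fun k => t3 k x) (d2 x) := (summable_t3 x).hasSum

lemma hasDerivAt_t1 (k : ℕ) (y : ℝ) : HasDerivAt (fun z => t1 k z) (t2 k y) y := by
  have h := (hasDerivAt_pow (2*k+1) y).const_mul (a k)
  simpa [t1, t2, Nat.add_sub_cancel] using h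

lemma hasDerivAt_t2 (k : ℕ) (y : ℝ) : HasDerivAt (fun z => t2 k z) (t3 k y) y := by
  have h := ((hasDerivAt_pow (2*k) y).const_mul (((2*k+1:ℕ):ℝ))).const_mul (a k)
  simpa [t2, t3, mul_assoc] using h

lemma f1_hasDerivAt (x : ℝ) : HasDerivAt f1 (d1 x) x := by
  have hρ : (1:ℝ) ≤ |x| + 1 := by linarith [abs_nonneg x]
  have hx : x ∈ Metric.ball (0:ℝ) (|x|+1) := by
    simp [Metric.mem_ball, Real.dist_eq]
  exact hasDerivAt_tsum_of_isPreconnected (𝕜 := ℝ)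
    (master ((|x|+1)^2) (by positivity)) Metric.isOpen_ball
    ((convex_ball (0:ℝ) (|x|+1)).isPreconnected)
    (fun k y _ => hasDerivAt_t1 k y)
    (fun k y hy => by
      have : |y| ≤ |x| + 1 := by
        have := Metric.mem_ball.mp hy; rw [Real.dist_eq, sub_zero] at this; linarith
      exact abs_t2_le hρ this k)
    hx (summable_t1 x) hx

lemma d1_hasDerivAt (x : ℝ) : HasDerivAt d1 (d2 x) x := by
  have hρ : (1:ℝ) ≤ |x| + 1 := by linarith [abs_nonneg x]
  have hx : x ∈ Metric.ball (0:ℝ) (|x|+1) := by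
    simp [Metric.mem_ball, Real.dist_eq]
  exact hasDerivAt_tsum_of_isPreconnected (𝕜 := ℝ)
    (master ((|x|+1)^2) (by positivity)) Metric.isOpen_ball
    ((convex_ball (0:ℝ) (|x|+1)).isPreconnected)
    (fun k y _ => hasDerivAt_t2 k y)
    (fun k y hy => by
      have : |y| ≤ |x| + 1 := by
        have := Metric.mem_ball.mp hy; rw [Real.dist_eq, sub_zero] at this; linarith
      exact abs_t3_le hρ this k)
    hx (summable_t2 x) hx


lemma aIdent (k : ℕ) : 4*((k:ℝ)+1)*((k:ℝ)+2) * a (k+1) = a k := by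
  unfold a
  have e1 : 2*(k+1)+1 = (2*k+1)+2 := by ring
  rw [e1, pow_add, Nat.factorial_succ (k+1), Nat.factorial_succ k]
  have h1 : (k.factorial : ℝ) ≠ 0 := Nat.cast_ne_zero.mpr k.factorial_ne_zero
  have h2 : ((k+1).factorial : ℝ) ≠ 0 := Nat.cast_ne_zero.mpr (k+1).factorial_ne_zero
  push_cast
  field_simp
  ring

lemma besselODE {x : ℝ} (hx : x ≠ 0) : d2 x + d1 x / x - f1 x / x^2 = f1 x := by
  have S1 := hasSum_t1 x
  have S2 := hasSum_t2 x
  have S3 := hasSum_t3 x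
  have L : HasSum (fun k => x^2 * t3 k x + x * t2 k x - t1 k x)
      (x^2 * d2 x + x * d1 x - f1 x) := ((S3.mul_left _).add (S2.mul_left _)).sub S1
  have Lterm : ∀ k : ℕ, x^2 * t3 k x + x * t2 k x - t1 k x = 4*(k:ℝ)*((k:ℝ)+1) * t1 k x := by
    intro k
    cases k with
    | zero => simp [t1, t2, t3]; ring
    | succ m =>
      unfold t1 t2 t3
      have e1 : 2*(m+1)-1 = 2*m+1 := by omega
      rw [e1]
      have e2 : 2*(m+1)+1 = (2*m+1)+2 := by ring
      have e3 : 2*(m+1) = (2*m+1)+1 := by ring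
      rw [e2, e3, pow_add, pow_add]
      push_cast
      ring
  have L' : HasSum (fun k : ℕ => 4*(k:ℝ)*((k:ℝ)+1) * t1 k x)
      (x^2 * d2 x + x * d1 x - f1 x) := by rwa [funext Lterm] at L
  have Lsh := (hasSum_nat_add_iff' (f := fun k : ℕ => 4*(k:ℝ)*((k:ℝ)+1) * t1 k x) 1).mpr L'
  simp only [Finset.range_one, Finset.sum_singleton, Nat.cast_zero] at Lsh
  rw [show (4*(0:ℝ)*((0:ℝ)+1) * t1 0 x) = 0 by ring, sub_zero] at Lsh
  have R : HasSum (fun k => x^2 * t1 k x) (x^2 * f1 x) := S1.mul_left _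
  have key : x^2 * d2 x + x * d1 x - f1 x = x^2 * f1 x := by
    refine HasSum.unique ?_ R
    convert Lsh using 2 with k
    · rfl
    unfold t1
    push_cast
    rw [show 2*(k+1)+1 = (2*k+1)+2 by ring, pow_add]
    rw [← aIdent k]
    ring
  field_simp
  linear_combination key

lemma denom_neg {x : ℝ} (hx : 0 < x) : f1 x - x * d1 x < 0 := by
  have S1 := hasSum_t1 x
  have S2 := hasSum_t2 x
  have L : HasSum (fun k => t1 k x - x * t2 k x) (f1 x - x * d1 x) := S1.sub (S2.mul_left x)
  have Lterm : ∀ k : ℕ, t1 k x - x * t2 k x = -(2*(k:ℝ) * t1 k x) := by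
    intro k
    unfold t1 t2
    rw [show 2*k+1 = (2*k)+1 from rfl, pow_succ]
    push_cast
    ring
  have L' : HasSum (fun k : ℕ => 2*(k:ℝ) * t1 k x) (-(f1 x - x * d1 x)) := by
    rw [funext Lterm] at L
    simpa using L.neg
  have hle : 2*((1:ℕ):ℝ) * t1 1 x ≤ -(f1 x - x * d1 x) := by
    refine le_hasSum L' 1 (fun j _ => ?_)
    have := a_pos j
    have : 0 < t1 j x := by unfold t1; positivity
    positivity
  have h1 : 0 < t1 1 x := by have := a_pos 1; unfold t1; positivity
  simp only [Nat.cast_one] at hle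
  linarith

end TCAux

open TCAux in
lemma besselI1_eq_f1 : besselI1 = f1 := by
  funext x
  unfold besselI1 f1
  refine tsum_congr fun k => ?_
  unfold t1 a
  rw [div_pow, div_pow, one_pow]
  ring

open TCAux in
lemma deriv_f1_eq : deriv f1 = d1 :=
  funext fun x => (f1_hasDerivAt x).deriv

open TCAux in
lemma deriv_besselI1_eq : deriv besselI1 = d1 := by
  rw [besselI1_eq_f1, deriv_f1_eq]

open TCAux

/-- The strong-adherence Taylor–Couette velocity profile: the denominator is
nonzero, `v` satisfies `𝓜(1 − ℓ²𝓜)v = 0` on `(0, R)`, and `v(R) = ΩR`,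
`v'(R) = 0`. -/
theorem taylor_couette_strong_adherence_solution
    (Ω ℓ R : ℝ) (hℓ : 0 < ℓ) (hR : 0 < R)
    (v : ℝ → ℝ)
    (hv : ∀ r, v r = Ω * r
      + Ω * (R * besselI1 (r / ℓ) - r * besselI1 (R / ℓ))
          / (besselI1 (R / ℓ) - R / ℓ * deriv besselI1 (R / ℓ))) :
    besselI1 (R / ℓ) - R / ℓ * deriv besselI1 (R / ℓ) ≠ 0 ∧
    (∀ r ∈ Set.Ioo (0:ℝ) R,
      cylOpM (fun s => v s - ℓ ^ 2 * cylOpM v s) r = 0) ∧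
    v R = Ω * R ∧ deriv v R = 0 := by
  have hℓ' : ℓ ≠ 0 := ne_of_gt hℓ
  have hX0 : 0 < R / ℓ := div_pos hR hℓ
  simp only [besselI1_eq_f1, deriv_besselI1_eq, deriv_f1_eq] at hv ⊢
  set X : ℝ := R / ℓ with hXdef
  have hX : 0 < X := hX0
  have hDneg : f1 X - X * d1 X < 0 := denom_neg hX
  set D : ℝ := f1 X - X * d1 X with hDdef
  have hD : D ≠ 0 := ne_of_lt hDneg
  set c1 : ℝ := Ω - Ω * f1 X / D with hc1
  set c2 : ℝ := Ω * R / D with hc2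
  have hXR : X * ℓ = R := by rw [hXdef]; field_simp
  clear_value X D c1 c2
  have hveq : v = fun r => c1 * r + c2 * f1 (r / ℓ) := by
    funext r
    rw [hv r, hc1, hc2]
    field_simp
    ring
  -- first derivative
  have hdivℓ : ∀ r : ℝ, HasDerivAt (fun s : ℝ => s / ℓ) (1/ℓ) r := fun r => by
    simpa using (hasDerivAt_id r).div_const ℓ
  have hV1 : ∀ r : ℝ, HasDerivAt v (c1 + c2 * (d1 (r/ℓ) * (1/ℓ))) r := by
    intro r
    rw [hveq]
    have h1 : HasDerivAt (fun s : ℝ => f1 (s/ℓ)) (d1 (r/ℓ) * (1/ℓ)) r :=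
      HasDerivAt.comp (h₂ := f1) r (f1_hasDerivAt (r/ℓ)) (hdivℓ r)
    have := ((hasDerivAt_id r).const_mul c1).add (h1.const_mul c2)
    simpa [Pi.add_def] using this
  have hderivv : deriv v = fun r => c1 + c2 * (d1 (r/ℓ) * (1/ℓ)) :=
    funext fun r => (hV1 r).deriv
  have hV2 : ∀ r : ℝ, HasDerivAt (deriv v) (c2 * (d2 (r/ℓ) * (1/ℓ) * (1/ℓ))) r := by
    intro r
    rw [hderivv]
    have h1 : HasDerivAt (fun s : ℝ => d1 (s/ℓ)) (d2 (r/ℓ) * (1/ℓ)) r :=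
      HasDerivAt.comp (h₂ := d1) r (d1_hasDerivAt (r/ℓ)) (hdivℓ r)
    have := ((hasDerivAt_const r c1).add ((h1.mul_const (1/ℓ)).const_mul c2))
    simpa [Pi.add_def, mul_assoc] using this
  have hderiv2 : deriv (deriv v) = fun r => c2 * (d2 (r/ℓ) * (1/ℓ) * (1/ℓ)) :=
    funext fun r => (hV2 r).deriv
  -- cylOpM v on (0, ∞)
  have hM : ∀ r : ℝ, 0 < r → cylOpM v r = c2 / ℓ^2 * f1 (r/ℓ) := by
    intro r hr
    have hr' : r ≠ 0 := ne_of_gt hr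
    have hx : (r/ℓ) ≠ 0 := by positivity
    have hODE := besselODE hx
    simp only [cylOpM]
    rw [hderiv2, hderivv]
    conv_lhs => rw [hveq]
    simp only
    field_simp at hODE ⊢
    linear_combination c2 * hODE
  -- conclusion
  refine ⟨hD, ?_, ?_, ?_⟩
  · intro r hr
    obtain ⟨hr0, hrR⟩ := hr
    have hWeq : ∀ s ∈ Set.Ioi (0:ℝ), v s - ℓ^2 * cylOpM v s = c1 * s := by
      intro s hs
      rw [hM s hs]
      conv_lhs => rw [hveq]
      field_simp
      ring
    have hEv : (fun s => v s - ℓ^2 * cylOpM v s) =ᶠ[nhds r] (fun s => c1 * s) :=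
      Filter.eventually_of_mem (isOpen_Ioi.mem_nhds hr0) hWeq
    have hd1 : deriv (fun s : ℝ => c1 * s) = fun _ : ℝ => c1 := by
      funext s
      simpa using ((hasDerivAt_id s).const_mul c1).deriv
    have e2 : deriv (fun s => v s - ℓ^2 * cylOpM v s) r = c1 := by
      rw [hEv.deriv_eq, hd1]
    have e3 : deriv (deriv (fun s => v s - ℓ^2 * cylOpM v s)) r = 0 := by
      rw [hEv.deriv.deriv_eq, hd1, deriv_const]
    have e4 : (fun s => v s - ℓ^2 * cylOpM v s) r = c1 * r := hWeq r hr0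
    show deriv (deriv (fun s => v s - ℓ^2 * cylOpM v s)) r
        + (1/r) * deriv (fun s => v s - ℓ^2 * cylOpM v s) r
        - (fun s => v s - ℓ^2 * cylOpM v s) r / r ^ 2 = 0
    rw [e2, e3, e4]
    have hr' : r ≠ 0 := ne_of_gt hr0
    field_simp
    ring
  · rw [hv R, ← hXdef]
    simp
  · have h0 : deriv v R = c1 + c2 * (d1 (R/ℓ) * (1/ℓ)) := (hV1 R).deriv
    rw [h0, ← hXdef, hc1, hc2]
    have key : Ω * R / D * (d1 X * (1/ℓ)) = Ω * (X * d1 X) / D := by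
      rw [← hXR]; field_simp
    rw [key]
    have key2 : Ω * (X * d1 X) - Ω * f1 X = -(Ω * D) := by rw [hDdef]; ring
    calc Ω - Ω * f1 X / D + Ω * (X * d1 X) / D
        = Ω + (Ω * (X * d1 X) - Ω * f1 X) / D := by ring
      _ = Ω + (-(Ω * D)) / D := by rw [key2]
      _ = 0 := by rw [neg_div, mul_div_assoc, div_self hD]; ring
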